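/- arXiv:1510.02827 — 2 statements merged into one kernel-verified Lean document; each statement's English description precedes it below -/
import Mathlib

section
/- Let ω be a code tree with first neck level N = N_1(ω) < ∞, at most M maps at each node, and linear parts with singular values in [σ̲, σ̄] ⊂ (0,1). Then for every s ≥ 0 and n ∈ ℕ, (σ̲^s)^N · M^s_n(Σ^{Ξω}) ≤ M^s_{N+n}(Σ^ω) ≤ (M σ̄^s)^N · M^s_n(Σ^{Ξω}), where M^s_j denotes the j-th stage net premeasure and Ξω is the shifted code tree. Consequently M^s(Σ^ω) > 0 if and only if M^s(Σ^{Ξω}) > 0, so the set E(s) = {ω : M^s(Σ^ω) > 0} is Ξ-invariant. -/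
/-!
By the neck property at level `N = N₁(ω)`, every alive word `u` of length `≥ N` splits as
`u = w v` with `w` one of the at most `M ^ N` alive words of length `N` and `v` an alive word of
`Ξω`, and then `T^ω_u = T^ω_w T^{Ξω}_v`. All singular values of `T^ω_w` lie in
`[σl ^ N, σu ^ N]`, so by the min–max characterisation
`σl ^ N σᵢ(T_v) ≤ σᵢ(T_u) ≤ σu ^ N σᵢ(T_v)`, whence
`(σl ^ s) ^ N Φ^s(T_v) ≤ Φ^s(T_u) ≤ (σu ^ s) ^ N Φ^s(T_v)`.
Dropping the first `N` letters of a cover of `Σ^ω` gives a cover of `Σ^{Ξω}`, and prefixing a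
cover of `Σ^{Ξω}` by all alive words of length `N` gives a cover of `Σ^ω` with at most `M ^ N`
times as many words; this yields the two inequalities between the stages, and the positivity
statement follows since `M^s` is the supremum of its stages.
-/

/-- The singular values of a real `d × d` matrix, in decreasing order:
`singVals A 0 ≥ singVals A 1 ≥ ⋯`. They are the square roots of the
eigenvalues of `Aᴴ * A`, sorted decreasingly. -/
noncomputable def singVals {d : ℕ} (A : Matrix (Fin d) (Fin d) ℝ) : Fin d → ℝ :=
  fun i =>
    let f : Fin d → ℝ :=
      fun j => Real.sqrt ((Matrix.isHermitian_conjTranspose_mul_self A).eigenvalues j)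
    (f ∘ Tuple.sort f) i.rev

/-- The singular value function `Φ^s(A) = σ_1 ⋯ σ_{m-1} · σ_m^{s-m+1}` for
`m - 1 ≤ s < m ≤ d`, and `Φ^s(A) = σ_1 ⋯ σ_{d-1} · σ_d^{s-d+1}` for `s ≥ d`. -/
noncomputable def svf {d : ℕ} (A : Matrix (Fin d) (Fin d) ℝ) (s : ℝ) : ℝ :=
  let σ : ℕ → ℝ := fun i => if h : i < d then singVals A ⟨i, h⟩ else 1
  let m : ℕ := min d (⌊s⌋₊ + 1)
  (∏ i ∈ Finset.range (m - 1), σ i) * σ (m - 1) ^ (s - ((m : ℝ) - 1))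

/-- The cylinder of a finite word `w`: all infinite sequences extending `w`. -/
def cyl {I : Type*} (w : List I) : Set (ℕ → I) :=
  {x | ∀ n, (h : n < w.length) → x n = w.get ⟨n, h⟩}

/-- The product `T_{i_1} T_{i_2} ⋯ T_{i_k}` of the linear parts along the word
`w = i_1 ⋯ i_k` of a code tree whose edge matrices are given by `A`. -/
noncomputable def Tprod {M d : ℕ}
    (A : List (Fin M) → Fin M → Matrix (Fin d) (Fin d) ℝ)
    (w : List (Fin M)) : Matrix (Fin d) (Fin d) ℝ :=
  (w.foldl (fun p i => (p.1 ++ [i], p.2 * A p.1 i))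
    (([] : List (Fin M)), (1 : Matrix (Fin d) (Fin d) ℝ))).2

/-- A code tree with a neck list: `alive` is the tree `Σ_*` of words (with at
most `M` children per node), `A w i` is the linear part of the map indexed by
`i` at the node `w`, and `N` is the neck list (with the convention `N 0 = 0`,
the necks being `N 1 < N 2 < ⋯`). -/
structure CodeTree (M d : ℕ) where
  alive : List (Fin M) → Prop
  alive_nil : alive []
  alive_pre : ∀ w i, alive (w ++ [i]) → alive w
  A : List (Fin M) → Fin M → Matrix (Fin d) (Fin d) ℝ
  N : ℕ → ℕ
  N_zero : N 0 = 0
  N_mono : StrictMono N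
  neck : ∀ m, 1 ≤ m → ∀ w w', alive w → alive w' →
    w.length = N m → w'.length = N m →
    ∀ v, (alive (w ++ v) ↔ alive (w' ++ v)) ∧ A (w ++ v) = A (w' ++ v)

/-- `ω'` is the shift `Ξω` of `ω`: its tree is the subtree of `ω` rooted at any
(equivalently, by the neck property, some) alive word of length `N 1`, and its
neck list is `m ↦ N (m+1) - N 1`. -/
def IsShiftOf {M d : ℕ} (ω' ω : CodeTree M d) : Prop :=
  (∀ m, ω'.N m = ω.N (m + 1) - ω.N 1) ∧
  ∃ w0, ω.alive w0 ∧ w0.length = ω.N 1 ∧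
    (∀ v, (ω'.alive v ↔ ω.alive (w0 ++ v))) ∧
    (∀ v, ω'.A v = ω.A (w0 ++ v))

/-- The code space `Σ^ω` of all infinite branches of the tree. -/
def codeSpace {M d : ℕ} (ω : CodeTree M d) : Set (ℕ → Fin M) :=
  {x | ∀ n : ℕ, ω.alive (List.ofFn fun k : Fin n => x k)}

/-- The `j`-th stage net premeasure `M^s_j(E)` of the code tree `ω`: infimum of
`∑ Φ^s(T^ω_w)` over covers of `E` by cylinders of alive words of length `≥ j`. -/
noncomputable def stage {M d : ℕ} (ω : CodeTree M d) (s : ℝ) (j : ℕ)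
    (E : Set (ℕ → Fin M)) : ENNReal :=
  ⨅ (J : Set (List (Fin M))) (_ : ∀ w ∈ J, ω.alive w ∧ j ≤ w.length)
    (_ : E ⊆ ⋃ w ∈ J, cyl w),
    ∑' w : J, ENNReal.ofReal (svf (Tprod ω.A w) s)

/-- The net measure `M^s(Σ^ω)`. -/
noncomputable def netM {M d : ℕ} (ω : CodeTree M d) (s : ℝ) : ENNReal :=
  ⨆ j : ℕ, stage ω s j (codeSpace ω)

open Matrix RealInnerProductSpace

lemma Matrix.IsHermitian.dotProduct_mulVec_eq_sum {n : Type*} [Fintype n] [DecidableEq n]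
    {H : Matrix n n ℝ} (hH : H.IsHermitian) (x : EuclideanSpace ℝ n) :
    x ⬝ᵥ (H *ᵥ x) = ∑ j, hH.eigenvalues j * ⟪hH.eigenvectorBasis j, x⟫ ^ 2 := by
  set e := hH.eigenvectorBasis
  have h_eigen : ∀ j, ⟪e j, WithLp.toLp 2 (H *ᵥ x)⟫ = hH.eigenvalues j * ⟪e j, x⟫ := by
    intro j
    rw [EuclideanSpace.inner_eq_star_dotProduct, EuclideanSpace.inner_eq_star_dotProduct]
    have hT : Hᵀ = H := by simpa [conjTranspose_eq_transpose_of_trivial] using hH.eq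
    simp only [star_trivial]
    rw [dotProduct_comm, dotProduct_mulVec, ← mulVec_transpose, hT, hH.mulVec_eigenvectorBasis,
      smul_dotProduct, smul_eq_mul, dotProduct_comm]
  calc x ⬝ᵥ (H *ᵥ x) = ⟪x, WithLp.toLp 2 (H *ᵥ x)⟫ := by
        rw [EuclideanSpace.inner_eq_star_dotProduct, dotProduct_comm]; rfl
    _ = ∑ j, ⟪x, e j⟫ * ⟪e j, WithLp.toLp 2 (H *ᵥ x)⟫ := (e.sum_inner_mul_inner _ _).symm
    _ = _ := by
        refine Finset.sum_congr rfl fun j _ => ?_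
        rw [h_eigen, real_inner_comm x]; ring

lemma OrthonormalBasis.sum_sq_inner_eq_dotProduct {n : Type*} [Fintype n]
    (b : OrthonormalBasis n ℝ (EuclideanSpace ℝ n)) (x : EuclideanSpace ℝ n) :
    ∑ j, ⟪b j, x⟫ ^ 2 = x ⬝ᵥ x := by
  rw [b.sum_sq_inner_right, ← real_inner_self_eq_norm_sq,
    EuclideanSpace.inner_eq_star_dotProduct, star_trivial]

lemma exists_ne_zero_forall_inner_eq_zero {E : Type*} [NormedAddCommGroup E]
    [InnerProductSpace ℝ E] [FiniteDimensional ℝ E] (S : Finset E)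
    (hS : S.card < Module.finrank ℝ E) : ∃ x ≠ 0, ∀ y ∈ S, ⟪y, x⟫ = 0 := by
  set K := Submodule.span ℝ (S : Set E)
  have hK : Module.finrank ℝ K < Module.finrank ℝ E := (finrank_span_finset_le_card S).trans_lt hS
  have hKo : Kᗮ ≠ ⊥ := by
    intro h
    have := K.finrank_add_finrank_orthogonal
    rw [h, finrank_bot] at this
    omega
  obtain ⟨x, hx, hx0⟩ := (Submodule.ne_bot_iff _).1 hKo
  exact ⟨x, hx0, fun y hy => (K.mem_orthogonal x).1 hx y (Submodule.subset_span hy)⟩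

section SingularValues

variable {d : ℕ}

noncomputable def singValsPerm (A : Matrix (Fin d) (Fin d) ℝ) : Equiv.Perm (Fin d) :=
  Fin.revPerm.trans (Tuple.sort fun j => √((isHermitian_conjTranspose_mul_self A).eigenvalues j))

lemma singVals_nonneg (A : Matrix (Fin d) (Fin d) ℝ) (i : Fin d) : 0 ≤ singVals A i :=
  Real.sqrt_nonneg _

lemma sq_singVals (A : Matrix (Fin d) (Fin d) ℝ) (i : Fin d) :
    singVals A i ^ 2 = (isHermitian_conjTranspose_mul_self A).eigenvalues (singValsPerm A i) :=
  Real.sq_sqrt ((posSemidef_conjTranspose_mul_self A).eigenvalues_nonneg _)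

lemma singVals_antitone (A : Matrix (Fin d) (Fin d) ℝ) : Antitone (singVals A) :=
  fun _ _ hij => Tuple.monotone_sort (fun j =>
    √((isHermitian_conjTranspose_mul_self A).eigenvalues j)) (Fin.rev_le_rev.2 hij)

noncomputable def singBasis (A : Matrix (Fin d) (Fin d) ℝ) :
    OrthonormalBasis (Fin d) ℝ (EuclideanSpace ℝ (Fin d)) :=
  (isHermitian_conjTranspose_mul_self A).eigenvectorBasis.reindex (singValsPerm A).symm

lemma dotProduct_mulVec_self_eq_sum (A : Matrix (Fin d) (Fin d) ℝ)
    (x : EuclideanSpace ℝ (Fin d)) :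
    (A *ᵥ x) ⬝ᵥ (A *ᵥ x) = ∑ j, singVals A j ^ 2 * ⟪singBasis A j, x⟫ ^ 2 := by
  have hAA := isHermitian_conjTranspose_mul_self A
  have hquad : (A *ᵥ x) ⬝ᵥ (A *ᵥ x) = x ⬝ᵥ ((Aᴴ * A) *ᵥ x) := by
    rw [← mulVec_mulVec, dotProduct_mulVec x, conjTranspose_eq_transpose_of_trivial,
      vecMul_transpose]
  rw [hquad, hAA.dotProduct_mulVec_eq_sum, ← Equiv.sum_comp (singValsPerm A)]
  simp [singBasis, sq_singVals]

variable {A : Matrix (Fin d) (Fin d) ℝ} {x : EuclideanSpace ℝ (Fin d)} {c : ℝ}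

lemma le_dotProduct_mulVec_self_of_le (h : ∀ j, ⟪singBasis A j, x⟫ ≠ 0 → c ≤ singVals A j ^ 2) :
    c * (x ⬝ᵥ x) ≤ (A *ᵥ x) ⬝ᵥ (A *ᵥ x) := by
  rw [dotProduct_mulVec_self_eq_sum, ← (singBasis A).sum_sq_inner_eq_dotProduct, Finset.mul_sum]
  refine Finset.sum_le_sum fun j _ => ?_
  by_cases hj : ⟪singBasis A j, x⟫ = 0
  · simp [hj]
  · exact mul_le_mul_of_nonneg_right (h j hj) (sq_nonneg _)

lemma dotProduct_mulVec_self_le_of_le (h : ∀ j, ⟪singBasis A j, x⟫ ≠ 0 → singVals A j ^ 2 ≤ c) :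
    (A *ᵥ x) ⬝ᵥ (A *ᵥ x) ≤ c * (x ⬝ᵥ x) := by
  rw [dotProduct_mulVec_self_eq_sum, ← (singBasis A).sum_sq_inner_eq_dotProduct, Finset.mul_sum]
  refine Finset.sum_le_sum fun j _ => ?_
  by_cases hj : ⟪singBasis A j, x⟫ = 0
  · simp [hj]
  · exact mul_le_mul_of_nonneg_right (h j hj) (sq_nonneg _)

end SingularValues

section SingularValueComparison

variable {d : ℕ}

lemma singVals_le_mul_of_dotProduct_le {B C : Matrix (Fin d) (Fin d) ℝ} {b : ℝ} (hb : 0 ≤ b)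
    (h : ∀ x : Fin d → ℝ, (C *ᵥ x) ⬝ᵥ (C *ᵥ x) ≤ b ^ 2 * ((B *ᵥ x) ⬝ᵥ (B *ᵥ x)))
    (i : Fin d) : singVals C i ≤ b * singVals B i := by
  classical
  -- min–max: by a dimension count some `x ≠ 0` is orthogonal to the singular directions `j > i`
  -- of `C` and `j < i` of `B`; then `‖C x‖ ≥ σᵢ(C) ‖x‖` and `‖B x‖ ≤ σᵢ(B) ‖x‖`
  set S := (Finset.Ioi i).image (singBasis C) ∪ (Finset.Iio i).image (singBasis B)
  have hS : S.card < Module.finrank ℝ (EuclideanSpace ℝ (Fin d)) :=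
    calc S.card ≤ (Finset.Ioi i).card + (Finset.Iio i).card :=
          (Finset.card_union_le _ _).trans (add_le_add Finset.card_image_le Finset.card_image_le)
      _ < Module.finrank ℝ (EuclideanSpace ℝ (Fin d)) := by
          rw [Fin.card_Ioi, Fin.card_Iio, finrank_euclideanSpace_fin]; omega
  obtain ⟨x, hx0, hx⟩ := exists_ne_zero_forall_inner_eq_zero S hS
  have hxx : 0 < x ⬝ᵥ x := by
    rw [← (singBasis C).sum_sq_inner_eq_dotProduct, OrthonormalBasis.sum_sq_inner_right]
    exact pow_pos (norm_pos_iff.2 hx0) 2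
  have hC : singVals C i ^ 2 * (x ⬝ᵥ x) ≤ (C *ᵥ x) ⬝ᵥ (C *ᵥ x) := by
    refine le_dotProduct_mulVec_self_of_le fun j hj => ?_
    have hji : j ≤ i := not_lt.1 fun hij =>
      hj (hx _ (Finset.mem_union_left _ (Finset.mem_image_of_mem _ (Finset.mem_Ioi.2 hij))))
    exact pow_le_pow_left₀ (singVals_nonneg C i) (singVals_antitone C hji) 2
  have hB : (B *ᵥ x) ⬝ᵥ (B *ᵥ x) ≤ singVals B i ^ 2 * (x ⬝ᵥ x) := by
    refine dotProduct_mulVec_self_le_of_le fun j hj => ?_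
    have hij : i ≤ j := not_lt.1 fun hji =>
      hj (hx _ (Finset.mem_union_right _ (Finset.mem_image_of_mem _ (Finset.mem_Iio.2 hji))))
    exact pow_le_pow_left₀ (singVals_nonneg B j) (singVals_antitone B hij) 2
  have hsq : singVals C i ^ 2 ≤ (b * singVals B i) ^ 2 := by
    refine le_of_mul_le_mul_right ?_ hxx
    calc singVals C i ^ 2 * (x ⬝ᵥ x) ≤ b ^ 2 * ((B *ᵥ x) ⬝ᵥ (B *ᵥ x)) := hC.trans (h x)
      _ ≤ b ^ 2 * (singVals B i ^ 2 * (x ⬝ᵥ x)) := mul_le_mul_of_nonneg_left hB (sq_nonneg b)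
      _ = (b * singVals B i) ^ 2 * (x ⬝ᵥ x) := by ring
  exact (pow_le_pow_iff_left₀ (singVals_nonneg C i)
    (mul_nonneg hb (singVals_nonneg B i)) two_ne_zero).1 hsq

variable {T : Matrix (Fin d) (Fin d) ℝ}

lemma dotProduct_mulVec_self_le {b : ℝ} (hT : ∀ j, singVals T j ≤ b) (y : Fin d → ℝ) :
    (T *ᵥ y) ⬝ᵥ (T *ᵥ y) ≤ b ^ 2 * (y ⬝ᵥ y) :=
  dotProduct_mulVec_self_le_of_le (x := WithLp.toLp 2 y) fun j _ =>
    pow_le_pow_left₀ (singVals_nonneg T j) (hT j) 2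

lemma le_dotProduct_mulVec_self {a : ℝ} (ha : 0 ≤ a) (hT : ∀ j, a ≤ singVals T j)
    (y : Fin d → ℝ) : a ^ 2 * (y ⬝ᵥ y) ≤ (T *ᵥ y) ⬝ᵥ (T *ᵥ y) :=
  le_dotProduct_mulVec_self_of_le (x := WithLp.toLp 2 y) fun j _ => pow_le_pow_left₀ ha (hT j) 2

lemma singVals_mul_le {b : ℝ} (hb : 0 ≤ b) (hT : ∀ j, singVals T j ≤ b)
    (B : Matrix (Fin d) (Fin d) ℝ) (i : Fin d) : singVals (T * B) i ≤ b * singVals B i :=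
  singVals_le_mul_of_dotProduct_le hb (fun x => by
    rw [← mulVec_mulVec]; exact dotProduct_mulVec_self_le hT _) i

lemma mul_singVals_le_singVals_mul {a : ℝ} (ha : 0 < a) (hT : ∀ j, a ≤ singVals T j)
    (B : Matrix (Fin d) (Fin d) ℝ) (i : Fin d) : a * singVals B i ≤ singVals (T * B) i := by
  have h := singVals_le_mul_of_dotProduct_le (B := T * B) (C := B) (inv_nonneg.2 ha.le)
    (fun x => by
      rw [← mulVec_mulVec, inv_pow, le_inv_mul_iff₀ (by positivity)]
      exact le_dotProduct_mulVec_self ha.le hT _) i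
  rwa [le_inv_mul_iff₀ ha] at h

end SingularValueComparison

lemma prod_range_mul_rpow_le {σ τ : ℕ → ℝ} {b t : ℝ} {k : ℕ} (hb : 0 ≤ b) (ht : 0 ≤ t)
    (hσ : ∀ i ≤ k, 0 ≤ σ i) (hτ : ∀ i ≤ k, 0 ≤ τ i) (h : ∀ i ≤ k, τ i ≤ b * σ i) :
    (∏ i ∈ Finset.range k, τ i) * τ k ^ t ≤
      b ^ k * b ^ t * ((∏ i ∈ Finset.range k, σ i) * σ k ^ t) := by
  have hprod : ∏ i ∈ Finset.range k, τ i ≤ b ^ k * ∏ i ∈ Finset.range k, σ i := by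
    rw [← Finset.card_range k, ← Finset.prod_const, Finset.card_range, ← Finset.prod_mul_distrib]
    exact Finset.prod_le_prod (fun i hi => hτ i (Finset.mem_range.1 hi).le)
      (fun i hi => h i (Finset.mem_range.1 hi).le)
  have hlast : τ k ^ t ≤ b ^ t * σ k ^ t := by
    rw [← Real.mul_rpow hb (hσ k le_rfl)]
    exact Real.rpow_le_rpow (hτ k le_rfl) (h k le_rfl) ht
  calc (∏ i ∈ Finset.range k, τ i) * τ k ^ t
      ≤ (b ^ k * ∏ i ∈ Finset.range k, σ i) * (b ^ t * σ k ^ t) :=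
        mul_le_mul hprod hlast (Real.rpow_nonneg (hτ k le_rfl) t)
          (mul_nonneg (pow_nonneg hb k) (Finset.prod_nonneg fun i hi =>
            hσ i (Finset.mem_range.1 hi).le))
    _ = b ^ k * b ^ t * ((∏ i ∈ Finset.range k, σ i) * σ k ^ t) := by ring

section SingularValueFunction

variable {d : ℕ}

lemma svf_le_rpow_mul (hd : 0 < d) {B C : Matrix (Fin d) (Fin d) ℝ} {b s : ℝ} (hb : 0 < b)
    (hs : 0 ≤ s) (h : ∀ i, singVals C i ≤ b * singVals B i) : svf C s ≤ b ^ s * svf B s := by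
  set m := min d (⌊s⌋₊ + 1)
  have hm1 : 1 ≤ m := le_min hd (Nat.succ_pos _)
  have hmd : m ≤ d := min_le_left _ _
  have ht : 0 ≤ s - ((m : ℝ) - 1) := by
    have : (m : ℝ) ≤ ⌊s⌋₊ + 1 := by exact_mod_cast min_le_right d (⌊s⌋₊ + 1)
    linarith [Nat.floor_le hs]
  have hbs : b ^ s = b ^ (m - 1) * b ^ (s - ((m : ℝ) - 1)) := by
    rw [← Real.rpow_natCast, ← Real.rpow_add hb, Nat.cast_sub hm1]
    ring_nf
  rw [hbs]
  -- `svf` unfolds to the shape of `prod_range_mul_rpow_le` with `k = m - 1`, `t = s - (m - 1)`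
  exact prod_range_mul_rpow_le hb.le ht
    (fun i hi => by rw [dif_pos (by omega)]; exact singVals_nonneg B _)
    (fun i hi => by rw [dif_pos (by omega)]; exact singVals_nonneg C _)
    (fun i hi => by rw [dif_pos (by omega), dif_pos (by omega)]; exact h _)

lemma rpow_mul_svf_le (hd : 0 < d) {B C : Matrix (Fin d) (Fin d) ℝ} {a s : ℝ} (ha : 0 < a)
    (hs : 0 ≤ s) (h : ∀ i, a * singVals B i ≤ singVals C i) : a ^ s * svf B s ≤ svf C s := by
  have h' := svf_le_rpow_mul hd (inv_pos.2 ha) hs fun i => (le_inv_mul_iff₀ ha).2 (h i)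
  rwa [Real.inv_rpow ha.le, le_inv_mul_iff₀ (Real.rpow_pos_of_pos ha s)] at h'

end SingularValueFunction

section Tprod

variable {M d : ℕ}

lemma fst_foldl_Tprod (A : List (Fin M) → Fin M → Matrix (Fin d) (Fin d) ℝ) (w u : List (Fin M))
    (P : Matrix (Fin d) (Fin d) ℝ) :
    (w.foldl (fun p i => (p.1 ++ [i], p.2 * A p.1 i)) (u, P)).1 = u ++ w := by
  induction w generalizing u P with
  | nil => simp
  | cons i w ih => simp [ih]

lemma Tprod_append_singleton (A : List (Fin M) → Fin M → Matrix (Fin d) (Fin d) ℝ)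
    (w : List (Fin M)) (i : Fin M) : Tprod A (w ++ [i]) = Tprod A w * A w i := by
  have h := fst_foldl_Tprod A w [] 1
  rw [List.nil_append] at h
  simp only [Tprod, List.foldl_append, List.foldl_cons, List.foldl_nil, h]

lemma Tprod_append (A : List (Fin M) → Fin M → Matrix (Fin d) (Fin d) ℝ) (u w : List (Fin M)) :
    Tprod A (u ++ w) = Tprod A u * Tprod (fun v => A (u ++ v)) w := by
  induction w using List.reverseRecOn with
  | nil => simp [Tprod]
  | append_singleton w i ih =>
    rw [← List.append_assoc, Tprod_append_singleton, ih, Tprod_append_singleton, mul_assoc]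

variable {A : List (Fin M) → Fin M → Matrix (Fin d) (Fin d) ℝ}

lemma singVals_Tprod_mul_le {b : ℝ} (hb : 0 ≤ b) (hA : ∀ w i j, singVals (A w i) j ≤ b)
    (w : List (Fin M)) (B : Matrix (Fin d) (Fin d) ℝ) (j : Fin d) :
    singVals (Tprod A w * B) j ≤ b ^ w.length * singVals B j := by
  induction w using List.reverseRecOn generalizing B with
  | nil => simp [Tprod]
  | append_singleton w i ih =>
    rw [Tprod_append_singleton, mul_assoc, List.length_append, List.length_singleton, pow_succ,
      mul_assoc]
    exact (ih _).trans (mul_le_mul_of_nonneg_left (singVals_mul_le hb (hA w i) B j)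
      (pow_nonneg hb _))

lemma pow_mul_singVals_le_singVals_Tprod_mul {a : ℝ} (ha : 0 < a)
    (hA : ∀ w i j, a ≤ singVals (A w i) j) (w : List (Fin M)) (B : Matrix (Fin d) (Fin d) ℝ)
    (j : Fin d) : a ^ w.length * singVals B j ≤ singVals (Tprod A w * B) j := by
  induction w using List.reverseRecOn generalizing B with
  | nil => simp [Tprod]
  | append_singleton w i ih =>
    rw [Tprod_append_singleton, mul_assoc, List.length_append, List.length_singleton, pow_succ,
      mul_assoc]
    exact (mul_le_mul_of_nonneg_left (mul_singVals_le_singVals_mul ha (hA w i) B j)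
      (pow_nonneg ha.le _)).trans (ih _)

end Tprod

section Sequences

variable {I : Type*}

def takeSeq (n : ℕ) (x : ℕ → I) : List I := List.ofFn fun k : Fin n => x k

@[simp]
lemma length_takeSeq (n : ℕ) (x : ℕ → I) : (takeSeq n x).length = n := List.length_ofFn

lemma takeSeq_add (m n : ℕ) (x : ℕ → I) :
    takeSeq (m + n) x = takeSeq m x ++ takeSeq n (fun k => x (m + k)) := by
  simp [takeSeq, List.ofFn_add]

lemma takeSeq_prefix {m n : ℕ} (h : m ≤ n) (x : ℕ → I) : takeSeq m x <+: takeSeq n x := by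
  obtain ⟨k, rfl⟩ := Nat.exists_eq_add_of_le h
  rw [takeSeq_add]
  exact List.prefix_append _ _

lemma mem_cyl_iff {w : List I} {x : ℕ → I} : x ∈ cyl w ↔ takeSeq w.length x = w := by
  simp only [List.ext_getElem_iff, length_takeSeq, true_and]
  simp only [cyl, Set.mem_ofPred_eq, takeSeq, List.getElem_ofFn, List.get_eq_getElem]
  exact ⟨fun h n hn _ => h n hn, fun h n hn => h n hn hn⟩

def appendSeq (w : List I) (y : ℕ → I) : ℕ → I :=
  fun k => if h : k < w.length then w[k] else y (k - w.length)

lemma appendSeq_add (w : List I) (y : ℕ → I) (k : ℕ) : appendSeq w y (w.length + k) = y k := by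
  simp [appendSeq]

lemma takeSeq_appendSeq (w : List I) (y : ℕ → I) (n : ℕ) :
    takeSeq (w.length + n) (appendSeq w y) = w ++ takeSeq n y := by
  have hw : takeSeq w.length (appendSeq w y) = w :=
    List.ext_getElem (by simp) fun k _ _ => by simp [takeSeq, appendSeq]
  rw [takeSeq_add, hw]
  simp only [appendSeq_add]

end Sequences

namespace CodeTree

variable {M d : ℕ} (ω : CodeTree M d)

lemma mem_codeSpace_iff {x : ℕ → Fin M} : x ∈ codeSpace ω ↔ ∀ n, ω.alive (takeSeq n x) :=
  Iff.rfl

lemma alive_of_prefix {w w' : List (Fin M)} (h : w <+: w') (hw' : ω.alive w') : ω.alive w := by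
  obtain ⟨v, rfl⟩ := h
  induction v using List.reverseRecOn with
  | nil => simpa using hw'
  | append_singleton v i ih =>
    exact ih (ω.alive_pre _ i (by rwa [← List.append_assoc] at hw'))

lemma alive_take {u : List (Fin M)} (hu : ω.alive u) (n : ℕ) : ω.alive (u.take n) :=
  ω.alive_of_prefix (List.take_prefix _ _) hu

lemma mem_codeSpace_of_forall_add (N : ℕ) {x : ℕ → Fin M}
    (h : ∀ n, ω.alive (takeSeq (N + n) x)) : x ∈ codeSpace ω :=
  fun n => ω.alive_of_prefix (takeSeq_prefix (Nat.le_add_left n N) x) (h n)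

lemma alive_of_mem_cyl {x : ℕ → Fin M} (hx : x ∈ codeSpace ω) {w : List (Fin M)}
    (hxw : x ∈ cyl w) : ω.alive w :=
  mem_cyl_iff.1 hxw ▸ ω.mem_codeSpace_iff.1 hx _

variable (s : ℝ) (E : Set (ℕ → Fin M))

lemma stage_le_tsum {j : ℕ} (J : Set (List (Fin M))) (hJ : ∀ w ∈ J, ω.alive w ∧ j ≤ w.length)
    (hcov : E ⊆ ⋃ w ∈ J, cyl w) :
    stage ω s j E ≤ ∑' w : J, ENNReal.ofReal (svf (Tprod ω.A w) s) :=
  iInf_le_of_le J (iInf_le_of_le hJ (iInf_le_of_le hcov le_rfl))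

lemma stage_mono {j j' : ℕ} (h : j ≤ j') : stage ω s j E ≤ stage ω s j' E :=
  le_iInf fun J => le_iInf fun hJ => le_iInf fun hcov =>
    ω.stage_le_tsum s E J (fun w hw => ⟨(hJ w hw).1, h.trans (hJ w hw).2⟩) hcov

end CodeTree

namespace IsShiftOf

variable {M d : ℕ} {ω ω' : CodeTree M d}

lemma exists_alive (h : IsShiftOf ω' ω) : ∃ w, ω.alive w ∧ w.length = ω.N 1 := by
  obtain ⟨-, w, hw, hl, -⟩ := h
  exact ⟨w, hw, hl⟩

variable {w : List (Fin M)}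

lemma alive_append_iff (h : IsShiftOf ω' ω) (hw : ω.alive w) (hl : w.length = ω.N 1)
    (v : List (Fin M)) : ω.alive (w ++ v) ↔ ω'.alive v := by
  obtain ⟨-, w0, hw0, hl0, halive, -⟩ := h
  rw [(ω.neck 1 le_rfl w w0 hw hw0 hl hl0 v).1, halive]

lemma A_append (h : IsShiftOf ω' ω) (hw : ω.alive w) (hl : w.length = ω.N 1) :
    (fun v => ω.A (w ++ v)) = ω'.A := by
  obtain ⟨-, w0, hw0, hl0, -, hA⟩ := h
  funext v
  rw [(ω.neck 1 le_rfl w w0 hw hw0 hl hl0 v).2, hA]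

variable {u : List (Fin M)}

lemma Tprod_eq_mul (h : IsShiftOf ω' ω) (hu : ω.alive u) (hN : ω.N 1 ≤ u.length) :
    Tprod ω.A u = Tprod ω.A (u.take (ω.N 1)) * Tprod ω'.A (u.drop (ω.N 1)) := by
  conv_lhs => rw [← List.take_append_drop (ω.N 1) u]
  rw [Tprod_append, h.A_append (ω.alive_take hu _) (List.length_take_of_le hN)]

lemma alive_drop (h : IsShiftOf ω' ω) (hu : ω.alive u) (hN : ω.N 1 ≤ u.length) :
    ω'.alive (u.drop (ω.N 1)) := by
  rwa [← h.alive_append_iff (ω.alive_take hu _) (List.length_take_of_le hN),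
    List.take_append_drop]

lemma shift_mem_codeSpace (h : IsShiftOf ω' ω) {x : ℕ → Fin M} (hx : x ∈ codeSpace ω) :
    (fun k => x (ω.N 1 + k)) ∈ codeSpace ω' := ω'.mem_codeSpace_iff.2 fun n => by
  rw [← h.alive_append_iff (ω.mem_codeSpace_iff.1 hx _) (length_takeSeq _ _), ← takeSeq_add]
  exact ω.mem_codeSpace_iff.1 hx _

lemma append_mem_codeSpace (h : IsShiftOf ω' ω) (hw : ω.alive w) (hl : w.length = ω.N 1)
    {y : ℕ → Fin M} (hy : y ∈ codeSpace ω') : appendSeq w y ∈ codeSpace ω :=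
  ω.mem_codeSpace_of_forall_add (ω.N 1) fun n => by
    rw [← hl, takeSeq_appendSeq, h.alive_append_iff hw hl]
    exact hy n

variable {s : ℝ}

lemma svf_Tprod_le (h : IsShiftOf ω' ω) (hd : 0 < d) {σu : ℝ} (hσu : 0 < σu)
    (hσ : ∀ w i j, singVals (ω.A w i) j ≤ σu) (hs : 0 ≤ s) (hu : ω.alive u)
    (hN : ω.N 1 ≤ u.length) :
    svf (Tprod ω.A u) s ≤ (σu ^ s) ^ ω.N 1 * svf (Tprod ω'.A (u.drop (ω.N 1))) s := by
  rw [h.Tprod_eq_mul hu hN, Real.rpow_pow_comm hσu.le]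
  refine svf_le_rpow_mul hd (by positivity) hs fun j => ?_
  simpa [List.length_take_of_le hN] using singVals_Tprod_mul_le hσu.le hσ (u.take (ω.N 1)) _ j

lemma le_svf_Tprod (h : IsShiftOf ω' ω) (hd : 0 < d) {σl : ℝ} (hσl : 0 < σl)
    (hσ : ∀ w i j, σl ≤ singVals (ω.A w i) j) (hs : 0 ≤ s) (hu : ω.alive u)
    (hN : ω.N 1 ≤ u.length) :
    (σl ^ s) ^ ω.N 1 * svf (Tprod ω'.A (u.drop (ω.N 1))) s ≤ svf (Tprod ω.A u) s := by
  rw [h.Tprod_eq_mul hu hN, Real.rpow_pow_comm hσl.le]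
  refine rpow_mul_svf_le hd (by positivity) hs fun j => ?_
  simpa [List.length_take_of_le hN] using
    pow_mul_singVals_le_singVals_Tprod_mul hσl hσ (u.take (ω.N 1)) _ j

lemma cover_of_cover_shift (h : IsShiftOf ω' ω) {J' : Set (List (Fin M))}
    (hcov : codeSpace ω' ⊆ ⋃ v ∈ J', cyl v) :
    codeSpace ω ⊆ ⋃ u ∈ {u | ω.alive u ∧ ω.N 1 ≤ u.length ∧ u.drop (ω.N 1) ∈ J'}, cyl u := by
  intro x hx
  have hy := h.shift_mem_codeSpace hx
  obtain ⟨v, hv, hxv⟩ := Set.mem_iUnion₂.1 (hcov hy)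
  have hw := ω.mem_codeSpace_iff.1 hx (ω.N 1)
  have hl := length_takeSeq (ω.N 1) x
  refine Set.mem_iUnion₂.2 ⟨takeSeq (ω.N 1) x ++ v, ⟨?_, by simp, ?_⟩, ?_⟩
  · exact (h.alive_append_iff hw hl v).2 (ω'.alive_of_mem_cyl hy hxv)
  · rwa [List.drop_left' hl]
  · rw [mem_cyl_iff, List.length_append, hl, takeSeq_add, mem_cyl_iff.1 hxv]

lemma cover_shift_of_cover (h : IsShiftOf ω' ω) {J : Set (List (Fin M))}
    (hJ : ∀ u ∈ J, ω.N 1 ≤ u.length) (hcov : codeSpace ω ⊆ ⋃ u ∈ J, cyl u) :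
    codeSpace ω' ⊆ ⋃ v ∈ (·.drop (ω.N 1)) '' J, cyl v := by
  obtain ⟨w, hw, hl⟩ := h.exists_alive
  intro y hy
  obtain ⟨u, hu, hxu⟩ := Set.mem_iUnion₂.1 (hcov (h.append_mem_codeSpace hw hl hy))
  refine Set.mem_iUnion₂.2 ⟨u.drop (ω.N 1), Set.mem_image_of_mem _ hu, ?_⟩
  obtain ⟨k, hk⟩ : ∃ k, u.length = w.length + k := ⟨u.length - ω.N 1, by have := hJ u hu; omega⟩
  have hu_eq := mem_cyl_iff.1 hxu
  rw [hk, takeSeq_appendSeq] at hu_eq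
  subst hu_eq
  rw [mem_cyl_iff, List.drop_left' hl, length_takeSeq]

theorem stage_add_le (h : IsShiftOf ω' ω) (hd : 0 < d) (hM : 0 < M) {σu : ℝ} (hσu : 0 < σu)
    (hσ : ∀ w i j, singVals (ω.A w i) j ≤ σu) (hs : 0 ≤ s) (n : ℕ) :
    stage ω s (ω.N 1 + n) (codeSpace ω) ≤
      ENNReal.ofReal ((M : ℝ) * σu ^ s) ^ ω.N 1 * stage ω' s n (codeSpace ω') := by
  set N := ω.N 1
  set c := ENNReal.ofReal (σu ^ s) ^ N
  have hC : ENNReal.ofReal ((M : ℝ) * σu ^ s) ^ N = M ^ N * c := by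
    rw [ENNReal.ofReal_mul (Nat.cast_nonneg _), ENNReal.ofReal_natCast, mul_pow]
  have hC0 : ENNReal.ofReal ((M : ℝ) * σu ^ s) ^ N ≠ 0 :=
    pow_ne_zero _ (ENNReal.ofReal_pos.2 (by positivity)).ne'
  have hCtop : ENNReal.ofReal ((M : ℝ) * σu ^ s) ^ N ≠ ⊤ :=
    ENNReal.pow_ne_top ENNReal.ofReal_ne_top
  rw [stage.eq_1 ω' s n]
  simp only [ENNReal.mul_iInf_of_ne hC0 hCtop]
  refine le_iInf fun J' => le_iInf fun hJ' => le_iInf fun hcov' => ?_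
  set J := {u | ω.alive u ∧ N ≤ u.length ∧ u.drop N ∈ J'}
  have hJ : ∀ u ∈ J, ω.alive u ∧ N + n ≤ u.length := fun u ⟨hu, hNu, hdrop⟩ => by
    have := (hJ' _ hdrop).2
    rw [List.length_drop] at this
    exact ⟨hu, by omega⟩
  -- a word of `J` is determined by its first `N` letters (`M ^ N` choices) and its rest in `J'`
  let split : J → List.Vector (Fin M) N × J' := fun u =>
    (⟨u.1.take N, List.length_take_of_le u.2.2.1⟩, ⟨u.1.drop N, u.2.2.2⟩)
  have hsplit : Function.Injective split := fun u u' huu' => Subtype.ext <| by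
    have htake : u.1.take N = u'.1.take N := congrArg (fun p => p.1.1) huu'
    have hdrop : u.1.drop N = u'.1.drop N := congrArg (fun p => p.2.1) huu'
    rw [← List.take_append_drop N u.1, htake, hdrop, List.take_append_drop]
  calc stage ω s (N + n) (codeSpace ω)
      ≤ ∑' u : J, ENNReal.ofReal (svf (Tprod ω.A u) s) :=
        ω.stage_le_tsum s _ J hJ (h.cover_of_cover_shift hcov')
    _ ≤ ∑' u : J, c * ENNReal.ofReal (svf (Tprod ω'.A (split u).2) s) :=
        ENNReal.tsum_le_tsum fun u =>
          (ENNReal.ofReal_le_ofReal (h.svf_Tprod_le hd hσu hσ hs u.2.1 u.2.2.1)).trans_eq <| by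
            rw [ENNReal.ofReal_mul (by positivity), ENNReal.ofReal_pow (by positivity)]
    _ ≤ ∑' p : List.Vector (Fin M) N × J', c * ENNReal.ofReal (svf (Tprod ω'.A p.2) s) :=
        ENNReal.tsum_comp_le_tsum_of_injective hsplit
          fun p => c * ENNReal.ofReal (svf (Tprod ω'.A p.2) s)
    _ = ENNReal.ofReal ((M : ℝ) * σu ^ s) ^ N *
          ∑' v : J', ENNReal.ofReal (svf (Tprod ω'.A v) s) := by
        rw [ENNReal.tsum_prod', hC]
        simp only [ENNReal.tsum_mul_left, tsum_fintype, Finset.sum_const, Finset.card_univ,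
          card_vector, Fintype.card_fin, nsmul_eq_mul, Nat.cast_pow, mul_assoc]

theorem le_stage_add (h : IsShiftOf ω' ω) (hd : 0 < d) {σl : ℝ} (hσl : 0 < σl)
    (hσ : ∀ w i j, σl ≤ singVals (ω.A w i) j) (hs : 0 ≤ s) (n : ℕ) :
    ENNReal.ofReal (σl ^ s) ^ ω.N 1 * stage ω' s n (codeSpace ω') ≤
      stage ω s (ω.N 1 + n) (codeSpace ω) := by
  set N := ω.N 1
  set c := ENNReal.ofReal (σl ^ s) ^ N
  refine le_iInf fun J => le_iInf fun hJ => le_iInf fun hcov => ?_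
  have hNJ : ∀ u ∈ J, N ≤ u.length := fun u hu => (Nat.le_add_right N n).trans (hJ u hu).2
  have hJ' : ∀ v ∈ (·.drop N) '' J, ω'.alive v ∧ n ≤ v.length := by
    rintro _ ⟨u, hu, rfl⟩
    refine ⟨h.alive_drop (hJ u hu).1 (hNJ u hu), ?_⟩
    have := (hJ u hu).2
    rw [List.length_drop]
    omega
  let drop : J → (·.drop N) '' J := fun u => ⟨u.1.drop N, Set.mem_image_of_mem _ u.2⟩
  have hdrop : Function.Surjective drop := by
    rintro ⟨_, u, hu, rfl⟩
    exact ⟨⟨u, hu⟩, rfl⟩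
  calc c * stage ω' s n (codeSpace ω')
      ≤ c * ∑' v : (·.drop N) '' J, ENNReal.ofReal (svf (Tprod ω'.A v) s) :=
        mul_le_mul_right (ω'.stage_le_tsum s _ _ hJ' (h.cover_shift_of_cover hNJ hcov)) _
    _ ≤ c * ∑' u : J, ENNReal.ofReal (svf (Tprod ω'.A (u.1.drop N)) s) :=
        mul_le_mul_right (ENNReal.tsum_le_tsum_comp_of_surjective hdrop
          fun v => ENNReal.ofReal (svf (Tprod ω'.A v) s)) _
    _ = ∑' u : J, c * ENNReal.ofReal (svf (Tprod ω'.A (u.1.drop N)) s) :=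
        ENNReal.tsum_mul_left.symm
    _ ≤ ∑' u : J, ENNReal.ofReal (svf (Tprod ω.A u) s) :=
        ENNReal.tsum_le_tsum fun u => by
          refine le_of_eq_of_le ?_
            (ENNReal.ofReal_le_ofReal (h.le_svf_Tprod hd hσl hσ hs (hJ u u.2).1 (hNJ u u.2)))
          rw [ENNReal.ofReal_mul (by positivity), ENNReal.ofReal_pow (by positivity)]

end IsShiftOf

theorem statement9_general {M d : ℕ} (hd : 0 < d) (hM : 0 < M)
    (ω ω' : CodeTree M d) (hshift : IsShiftOf ω' ω)
    (σl σu : ℝ) (h0 : 0 < σl) (hlu : σl ≤ σu)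
    (hσ : ∀ w i j, σl ≤ singVals (ω.A w i) j ∧ singVals (ω.A w i) j ≤ σu)
    (s : ℝ) (hs : 0 ≤ s) :
    (∀ n : ℕ,
      ENNReal.ofReal (σl ^ s) ^ (ω.N 1) * stage ω' s n (codeSpace ω') ≤
        stage ω s (ω.N 1 + n) (codeSpace ω) ∧
      stage ω s (ω.N 1 + n) (codeSpace ω) ≤
        ENNReal.ofReal ((M : ℝ) * σu ^ s) ^ (ω.N 1) *
          stage ω' s n (codeSpace ω')) ∧
    (0 < netM ω s ↔ 0 < netM ω' s) := by
  have lower := hshift.le_stage_add hd h0 (fun w i j => (hσ w i j).1) hs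
  have upper := hshift.stage_add_le hd hM (h0.trans_le hlu) (fun w i j => (hσ w i j).2) hs
  refine ⟨fun n => ⟨lower n, upper n⟩, ?_⟩
  simp only [netM, lt_iSup_iff]
  constructor
  · rintro ⟨n, hn⟩
    have := hn.trans_le ((ω.stage_mono s _ (Nat.le_add_left n (ω.N 1))).trans (upper n))
    exact ⟨n, (ENNReal.mul_pos_iff.1 this).2⟩
  · rintro ⟨n, hn⟩
    have hc : 0 < ENNReal.ofReal (σl ^ s) ^ ω.N 1 :=
      ENNReal.pow_pos (ENNReal.ofReal_pos.2 (Real.rpow_pos_of_pos h0 s)) _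
    exact ⟨ω.N 1 + n, (ENNReal.mul_pos_iff.2 ⟨hc, hn⟩).trans_le (lower n)⟩

/-- For a code tree `ω` with first neck level `N 1`, at most `M` maps at each
node and singular values in `[σl, σu] ⊂ (0,1)`:
`(σl^s)^{N 1} M^s_n(Σ^{Ξω}) ≤ M^s_{N 1 + n}(Σ^ω) ≤ (M σu^s)^{N 1} M^s_n(Σ^{Ξω})`
for all `s ≥ 0` and `n`; consequently `M^s(Σ^ω) > 0 ↔ M^s(Σ^{Ξω}) > 0`, i.e.
the set `E(s) = {ω : M^s(Σ^ω) > 0}` is shift invariant. -/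
theorem statement9 {M d : ℕ} (hd : 0 < d) (hM : 0 < M)
    (ω ω' : CodeTree M d) (hshift : IsShiftOf ω' ω)
    (σl σu : ℝ) (h0 : 0 < σl) (hlu : σl ≤ σu) (hu : σu < 1)
    (hσ : ∀ w i j, σl ≤ singVals (ω.A w i) j ∧ singVals (ω.A w i) j ≤ σu)
    (hinv : ∀ w i, IsUnit (ω.A w i).det)
    (s : ℝ) (hs : 0 ≤ s) :
    (∀ n : ℕ,
      ENNReal.ofReal (σl ^ s) ^ (ω.N 1) * stage ω' s n (codeSpace ω') ≤
        stage ω s (ω.N 1 + n) (codeSpace ω) ∧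
      stage ω s (ω.N 1 + n) (codeSpace ω) ≤
        ENNReal.ofReal ((M : ℝ) * σu ^ s) ^ (ω.N 1) *
          stage ω' s n (codeSpace ω')) ∧
    (0 < netM ω s ↔ 0 < netM ω' s) :=
  statement9_general hd hM ω ω' hshift σl σu h0 hlu hσ s hs
end

section
/- Suppose every word i in a finite tree A has length between L' and L (with L' ≤ L), at most M children per node, Φ^s is submultiplicative with Φ^s ≤ 1 on each single generator, and the cylinders {[i] : i ∈ A} partition the set of words of length L. Then Σ_{j of length L} Φ^s(T_j) ≤ (Σ_{i ∈ A} Φ^s(T_i)) · M^{L − L'}. -/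
/-- The tree-extension estimate: if every word of a finite set `A` of words over
an alphabet of `M` letters has length between `L'` and `L`, the weight `f` is
nonnegative and submultiplicative with edge weights `φ ≤ 1`, and the cylinders
of `A` partition the words of length `L` (every length-`L` word has a unique
prefix in `A`), then `∑_{|w| = L} f w ≤ (∑_{w ∈ A} f w) · M^(L - L')`. -/
theorem statement12 (M L L' : ℕ) (hLL : L' ≤ L)
    (f : List (Fin M) → ℝ) (φ : List (Fin M) → Fin M → ℝ)
    (hf0 : ∀ w, 0 ≤ f w)
    (hφ0 : ∀ w i, 0 ≤ φ w i) (hφ1 : ∀ w i, φ w i ≤ 1)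
    (hsub : ∀ w i, f (w ++ [i]) ≤ f w * φ w i)
    (A : Finset (List (Fin M)))
    (hlen : ∀ w ∈ A, L' ≤ w.length ∧ w.length ≤ L)
    (hpart : ∀ v : Fin L → Fin M, ∃! w, w ∈ A ∧ w <+: List.ofFn v) :
    ∑ v : Fin L → Fin M, f (List.ofFn v) ≤ (∑ w ∈ A, f w) * (M : ℝ) ^ (L - L') := by
  classical
  -- extension decreases f
  have ext_le : ∀ u w : List (Fin M), f (w ++ u) ≤ f w := by
    intro u
    induction u using List.reverseRecOn with
    | nil => intro w; simp
    | append_singleton u i ih =>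
      intro w
      calc f (w ++ (u ++ [i])) = f ((w ++ u) ++ [i]) := by rw [List.append_assoc]
        _ ≤ f (w ++ u) * φ (w ++ u) i := hsub _ _
        _ ≤ f (w ++ u) * 1 :=
            mul_le_mul_of_nonneg_left (hφ1 _ _) (hf0 _)
        _ = f (w ++ u) := mul_one _
        _ ≤ f w := ih w
  choose g hg using fun v => (hpart v).exists
  have hgA : ∀ v, g v ∈ A := fun v => (hg v).1
  have hgp : ∀ v, g v <+: List.ofFn v := fun v => (hg v).2
  have key := Finset.sum_fiberwise_of_maps_to (s := Finset.univ) (g := g)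
    (fun v _ => hgA v) (fun v => f (List.ofFn v))
  rw [← key]
  rw [Finset.sum_mul]
  apply Finset.sum_le_sum
  intro w hw
  set S := Finset.univ.filter (fun v => g v = w) with hS
  have hcard : S.card ≤ M ^ (L - L') := by
    have hinj : Set.InjOn (fun (v : Fin L → Fin M) (j : Fin (L - L')) =>
        v ⟨L' + j, by omega⟩) (S : Set (Fin L → Fin M)) := by
      intro v1 h1 v2 h2 heq
      simp only [hS, Finset.mem_coe, Finset.mem_filter] at h1 h2
      have hw1 : w <+: List.ofFn v1 := h1.2 ▸ hgp v1
      have hw2 : w <+: List.ofFn v2 := h2.2 ▸ hgp v2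
      have hwL' : L' ≤ w.length := (hlen w hw).1
      funext i
      by_cases hi : (i : ℕ) < w.length
      · have e1 : (List.ofFn v1)[(i : ℕ)]'(by simp) = w[(i : ℕ)] :=
          (hw1.getElem hi).symm
        have e2 : (List.ofFn v2)[(i : ℕ)]'(by simp) = w[(i : ℕ)] :=
          (hw2.getElem hi).symm
        simpa [List.getElem_ofFn] using e1.trans e2.symm
      · have hiL : L' ≤ (i : ℕ) := le_trans hwL' (le_of_not_gt hi)
        have hj : (i : ℕ) - L' < L - L' := by omega
        have := congrFun heq ⟨(i : ℕ) - L', hj⟩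
        simp only at this
        have hii : (⟨L' + ((i : ℕ) - L'), by omega⟩ : Fin L) = i := by
          ext; simp; omega
        rwa [hii] at this
    have := Finset.card_le_card_of_injOn (t := (Finset.univ : Finset (Fin (L - L') → Fin M)))
        (fun (v : Fin L → Fin M) (j : Fin (L - L')) => v ⟨L' + j, by omega⟩)
        (fun v _ => Finset.mem_univ _) hinj
    simpa using this
  calc ∑ v ∈ S, f (List.ofFn v) ≤ ∑ _v ∈ S, f w := by
        apply Finset.sum_le_sum
        intro v hv
        simp only [hS, Finset.mem_filter] at hv
        obtain ⟨t, ht⟩ := hv.2 ▸ hgp v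
        rw [← ht]
        exact ext_le t w
    _ = S.card * f w := by rw [Finset.sum_const, nsmul_eq_mul]
    _ ≤ (M : ℝ) ^ (L - L') * f w := by
        apply mul_le_mul_of_nonneg_right _ (hf0 w)
        exact_mod_cast Nat.cast_le.mpr hcard
    _ = f w * (M : ℝ) ^ (L - L') := mul_comm _ _
end
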